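/- arXiv:2406.03788 — 6 statements merged into one kernel-verified Lean document; each statement's English description precedes it below -/
import Mathlib

section
/- Let (G,m,c) be a finite weighted graph whose underlying graph is a connected tree (connected and containing no cycle). Then 0 is not an eigenvalue of the 1-form Laplacian Δ₁, i.e., ker Δ₁ = {0} on the space of 1-forms. -/
open Finset

noncomputable section

/-- The coboundary operator `δ`: for a 1-form `φ`,
`δφ(x) = (1/m x) Σ_{e, e⁺ = x} c(e) φ(e)`, where edges with terminal vertex `x`
are the pairs `(y, x)`. -/
def deltaOp {V : Type*} [Fintype V] (m : V → ℝ) (c : V → V → ℝ) :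
    (V → V → ℝ) →ₗ[ℝ] (V → ℝ) where
  toFun φ := fun x => (m x)⁻¹ * ∑ y, c y x * φ y x
  map_add' φ ψ := by
    funext x
    have h : ∑ y, c y x * (φ y x + ψ y x) = (∑ y, c y x * φ y x) + ∑ y, c y x * ψ y x := by
      rw [← Finset.sum_add_distrib]
      exact Finset.sum_congr rfl fun y _ => by ring
    show (m x)⁻¹ * ∑ y, c y x * (φ y x + ψ y x)
        = (m x)⁻¹ * (∑ y, c y x * φ y x) + (m x)⁻¹ * ∑ y, c y x * ψ y x
    rw [h]; ring
  map_smul' a φ := by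
    funext x
    have h : ∑ y, c y x * (a * φ y x) = a * ∑ y, c y x * φ y x := by
      rw [Finset.mul_sum]
      exact Finset.sum_congr rfl fun y _ => by ring
    show (m x)⁻¹ * ∑ y, c y x * (a * φ y x) = a * ((m x)⁻¹ * ∑ y, c y x * φ y x)
    rw [h]; ring

/-- The difference operator `d` from functions on vertices to 1-forms supported on
the edge set (the support of `c`): `df(e) = f(e⁺) - f(e⁻)` for `e` an edge, `0` otherwise. -/
def dEdge {V : Type*} (c : V → V → ℝ) : (V → ℝ) →ₗ[ℝ] (V → V → ℝ) where
  toFun f := fun x y => if c x y = 0 then 0 else f y - f x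
  map_add' f g := by
    funext x y
    by_cases h : c x y = 0
    · simp [h]
    · simp [h]; ring
  map_smul' a f := by
    funext x y
    by_cases h : c x y = 0
    · simp [h]
    · simp [h]; ring

/-- The 0-form Laplacian `Δ₀ = δ ∘ d`:
`Δ₀ f (x) = (1/m x) Σ_y c(x,y) (f x - f y)`. -/
def lap0 {V : Type*} [Fintype V] (m : V → ℝ) (c : V → V → ℝ) :
    (V → ℝ) →ₗ[ℝ] (V → ℝ) where
  toFun f := fun x => (m x)⁻¹ * ∑ y, c x y * (f x - f y)
  map_add' f g := by
    funext x
    have h : ∑ y, c x y * ((f x + g x) - (f y + g y))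
        = (∑ y, c x y * (f x - f y)) + ∑ y, c x y * (g x - g y) := by
      rw [← Finset.sum_add_distrib]
      exact Finset.sum_congr rfl fun y _ => by ring
    show (m x)⁻¹ * ∑ y, c x y * ((f x + g x) - (f y + g y))
        = (m x)⁻¹ * (∑ y, c x y * (f x - f y)) + (m x)⁻¹ * ∑ y, c x y * (g x - g y)
    rw [h]; ring
  map_smul' a f := by
    funext x
    have h : ∑ y, c x y * (a * f x - a * f y) = a * ∑ y, c x y * (f x - f y) := by
      rw [Finset.mul_sum]
      exact Finset.sum_congr rfl fun y _ => by ring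
    show (m x)⁻¹ * ∑ y, c x y * (a * f x - a * f y) = a * ((m x)⁻¹ * ∑ y, c x y * (f x - f y))
    rw [h]; ring

/-- The 1-form Laplacian `Δ₁ = d ∘ δ`. -/
def lap1 {V : Type*} [Fintype V] (m : V → ℝ) (c : V → V → ℝ) :
    (V → V → ℝ) →ₗ[ℝ] (V → V → ℝ) :=
  (dEdge c).comp (deltaOp m c)

/-- The space of 1-forms: skew-symmetric functions on ordered pairs of vertices,
supported on the edge set (the support of `c`). -/
def oneForm {V : Type*} (c : V → V → ℝ) : Submodule ℝ (V → V → ℝ) where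
  carrier := {φ | (∀ x y, φ y x = -φ x y) ∧ ∀ x y, c x y = 0 → φ x y = 0}
  add_mem' := by
    rintro φ ψ ⟨hφ1, hφ2⟩ ⟨hψ1, hψ2⟩
    refine ⟨fun x y => ?_, fun x y h => ?_⟩
    · show φ y x + ψ y x = -(φ x y + ψ x y)
      rw [hφ1 x y, hψ1 x y]; ring
    · show φ x y + ψ x y = 0
      rw [hφ2 x y h, hψ2 x y h]; ring
  zero_mem' := ⟨fun x y => by simp, fun x y _ => rfl⟩
  smul_mem' := by
    rintro a φ ⟨h1, h2⟩
    refine ⟨fun x y => ?_, fun x y h => ?_⟩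
    · show a * φ y x = -(a * φ x y)
      rw [h1 x y]; ring
    · show a * φ x y = 0
      rw [h2 x y h]; ring


/-!
If `Δ₁ φ = dδφ = 0`, then `δφ` is constant along edges, hence constant on the connected graph;
as `∑ₓ m(x) δφ(x) = ∑ₓ ∑ᵧ c(y,x) φ(y,x)` vanishes by antisymmetry, `δφ = 0`, so `φ` is a
circulation. Along a circulation one can always leave a vertex through an edge with `φ > 0`
after entering it through one, so a nonzero `φ` traces out, in the finite graph, a cycle of
edges with `φ > 0`; such a cycle never uses an edge together with its reverse, so the graph is
not a tree.
-/

open Function in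
theorem Function.exists_iterate_mem_periodicPts {α : Type*} [Finite α] (f : α → α) (x : α) :
    ∃ k, f^[k] x ∈ periodicPts f := by
  obtain ⟨m, n, heq, hne⟩ : ∃ m n, f^[m] x = f^[n] x ∧ m ≠ n := by
    simpa [Injective] using not_injective_infinite_finite (f^[·] x)
  wlog hlt : m < n generalizing m n
  · exact this n m heq.symm hne.symm (by omega)
  refine ⟨m, mk_mem_periodicPts (Nat.sub_pos_of_lt hlt) ?_⟩
  rw [IsPeriodicPt, IsFixedPt, ← iterate_add_apply, Nat.sub_add_cancel hlt.le, heq]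

open Function in
theorem Relation.exists_cycle_of_forall_exists_succ {V : Type*} [Finite V] {R : V → V → Prop}
    (hsucc : ∀ a b, R a b → ∃ z, R b z) {a b : V} (hab : R a b) :
    ∃ (ℓ : ℕ) (u : Fin (ℓ + 1) → V), Injective u ∧ ∀ i, R (u i) (u (i + 1)) := by
  choose next hnext using fun y : {b // ∃ a, R a b} => hsucc _ _ y.2.choose_spec
  let f : {b // ∃ a, R a b} → {b // ∃ a, R a b} := fun y => ⟨next y, y, hnext y⟩
  obtain ⟨k, hk⟩ := exists_iterate_mem_periodicPts f ⟨b, a, hab⟩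
  set y := f^[k] ⟨b, a, hab⟩
  obtain ⟨ℓ, hℓ⟩ := Nat.exists_eq_succ_of_ne_zero (minimalPeriod_pos_of_mem_periodicPts hk).ne'
  refine ⟨ℓ, fun i => (f^[i] y).1, fun i j hij => ?_, fun i => ?_⟩
  · have hlt : ∀ i : Fin (ℓ + 1), (i : ℕ) ∈ Set.Iio (minimalPeriod f y) := by
      simp [hℓ, Fin.is_le]
    exact Fin.ext <| iterate_injOn_Iio_minimalPeriod (hlt i) (hlt j) (Subtype.ext hij)
  · have hwrap : f^[((i + 1 : Fin (ℓ + 1)) : ℕ)] y = f^[i + 1] y := by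
      rw [← iterate_mod_minimalPeriod_eq (n := i + 1), hℓ, Fin.val_add, Fin.val_one',
        Nat.add_mod_mod]
    simpa only [hwrap, iterate_succ_apply'] using hnext (f^[i] y)

theorem Finset.sum_sum_eq_zero_of_antisymm {ι M : Type*} [Fintype ι] [AddCommGroup M]
    [IsAddTorsionFree M] {f : ι → ι → M} (hf : ∀ x y, f y x = -f x y) :
    ∑ x, ∑ y, f x y = 0 :=
  self_eq_neg.mp <|
    calc ∑ x, ∑ y, f x y = ∑ y, ∑ x, f x y := Finset.sum_comm
      _ = ∑ y, ∑ x, -f y x :=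
        Finset.sum_congr rfl fun y _ => Finset.sum_congr rfl fun x _ => hf y x
      _ = -∑ x, ∑ y, f x y := by simp only [Finset.sum_neg_distrib]

section

variable {V : Type*} {c : V → V → ℝ} {φ : V → V → ℝ}

theorem pos_of_mem_oneForm (hnn : ∀ x y, 0 ≤ c x y) (hφ : φ ∈ oneForm c) {x y : V}
    (hxy : φ x y ≠ 0) : 0 < c x y :=
  (hnn x y).lt_of_ne' fun h => hxy (hφ.2 x y h)

theorem exists_pos_of_mem_oneForm (hφ : φ ∈ oneForm c) (hne : φ ≠ 0) : ∃ x y, 0 < φ x y := by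
  obtain ⟨x, y, hxy⟩ : ∃ x y, φ x y ≠ 0 := by
    by_contra! h
    exact hne (funext₂ h)
  rcases hxy.lt_or_gt with hneg | hpos
  · exact ⟨y, x, by rw [hφ.1 x y]; linarith⟩
  · exact ⟨x, y, hpos⟩

variable [Fintype V] {m : V → ℝ}

theorem deltaOp_apply (x : V) : deltaOp m c φ x = (m x)⁻¹ * ∑ y, c y x * φ y x := rfl

theorem lap1_apply_of_ne_zero {x y : V} (hxy : c x y ≠ 0) :
    lap1 m c φ x y = deltaOp m c φ y - deltaOp m c φ x :=
  if_neg hxy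

theorem deltaOp_eq_of_lap1_eq_zero
    (hconn : ∀ x y : V, Relation.ReflTransGen (fun a b => 0 < c a b) x y)
    (hlap : lap1 m c φ = 0) (x y : V) : deltaOp m c φ y = deltaOp m c φ x := by
  induction hconn x y with
  | refl => rfl
  | tail _ hab ih =>
    rw [← ih, ← sub_eq_zero, ← lap1_apply_of_ne_zero hab.ne', hlap]
    rfl

theorem sum_mul_deltaOp_eq_zero (hm : ∀ x, m x ≠ 0) (hsym : ∀ x y, c x y = c y x)
    (hφ : φ ∈ oneForm c) : ∑ x, m x * deltaOp m c φ x = 0 := by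
  simp only [deltaOp_apply, mul_inv_cancel_left₀ (hm _)]
  exact Finset.sum_sum_eq_zero_of_antisymm fun x y => by rw [hsym, hφ.1]; ring

theorem deltaOp_eq_zero_of_lap1_eq_zero (hm : ∀ x, 0 < m x) (hsym : ∀ x y, c x y = c y x)
    (hconn : ∀ x y : V, Relation.ReflTransGen (fun a b => 0 < c a b) x y)
    (hφ : φ ∈ oneForm c) (hlap : lap1 m c φ = 0) (x : V) : deltaOp m c φ x = 0 := by
  have hsum := sum_mul_deltaOp_eq_zero (fun x => (hm x).ne') hsym hφ
  simp only [deltaOp_eq_of_lap1_eq_zero hconn hlap x, ← Finset.sum_mul] at hsum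
  have hmass : 0 < ∑ x, m x := Finset.sum_pos (fun x _ => hm x) ⟨x, mem_univ x⟩
  exact (mul_eq_zero.mp hsum).resolve_left hmass.ne'

theorem exists_pos_of_deltaOp_eq_zero {y : V} (hm : m y ≠ 0) (hnn : ∀ x y, 0 ≤ c x y)
    (hφ : φ ∈ oneForm c) (hδ : deltaOp m c φ y = 0) {x : V} (hxy : 0 < φ x y) : ∃ z, 0 < φ y z := by
  by_contra! hout
  have hin : ∀ z, 0 ≤ c z y * φ z y := fun z =>
    mul_nonneg (hnn z y) (by rw [hφ.1 y z]; linarith [hout z])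
  have hsum : 0 < ∑ z, c z y * φ z y :=
    Finset.sum_pos' (fun z _ => hin z)
      ⟨x, mem_univ x, mul_pos (pos_of_mem_oneForm hnn hφ hxy.ne') hxy⟩
  rw [deltaOp_apply, mul_eq_zero] at hδ
  exact hsum.ne' (hδ.resolve_left (inv_ne_zero hm))

end

theorem tree_lap1_kernel_trivial_general
    {V : Type*} [Fintype V] (m : V → ℝ) (c : V → V → ℝ)
    (hm : ∀ x, 0 < m x) (hsym : ∀ x y, c x y = c y x)
    (hnn : ∀ x y, 0 ≤ c x y)
    (hconn : ∀ x y : V, Relation.ReflTransGen (fun a b => 0 < c a b) x y)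
    (htree : ¬ ∃ (ℓ : ℕ) (e : Fin (ℓ + 1) → V × V),
      (∀ i, 0 < c (e i).1 (e i).2) ∧
      (∀ i, (e i).2 = (e (i + 1)).1) ∧
      Function.Injective e ∧
      (∀ i j, e i ≠ ((e j).2, (e j).1))) :
    ∀ φ : V → V → ℝ, φ ∈ oneForm c → lap1 m c φ = 0 → φ = 0 := by
  intro φ hφ hlap
  by_contra hne
  obtain ⟨a, b, hab⟩ := exists_pos_of_mem_oneForm hφ hne
  have hδ := deltaOp_eq_zero_of_lap1_eq_zero hm hsym hconn hφ hlap
  obtain ⟨ℓ, u, hu, hpos⟩ := Relation.exists_cycle_of_forall_exists_succ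
    (fun _ y hxy => exists_pos_of_deltaOp_eq_zero (hm y).ne' hnn hφ (hδ y) hxy) hab
  refine htree ⟨ℓ, fun i => (u i, u (i + 1)), fun i => pos_of_mem_oneForm hnn hφ (hpos i).ne',
    fun i => rfl, fun i j hij => hu (congrArg Prod.fst hij), fun i j hij => ?_⟩
  have hji := hpos j
  simp only [Prod.ext_iff] at hij
  rw [← hij.1, ← hij.2, hφ.1] at hji
  linarith [hpos i]

/-- Let `(G, m, c)` be a finite weighted graph whose underlying graph is a
connected tree: connected and containing no cycle (a cycle being a nonempty chained,
cyclically closed sequence of pairwise distinct edges with `eᵢ ≠ -eⱼ` for all `i, j`).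
Then `0` is not an eigenvalue of the 1-form Laplacian `Δ₁`, i.e. `ker Δ₁ = {0}` on the
space of 1-forms. -/
theorem tree_lap1_kernel_trivial
    {V : Type*} [Fintype V] (m : V → ℝ) (c : V → V → ℝ)
    (hm : ∀ x, 0 < m x) (hsym : ∀ x y, c x y = c y x)
    (hnn : ∀ x y, 0 ≤ c x y) (hloop : ∀ x, c x x = 0)
    (hconn : ∀ x y : V, Relation.ReflTransGen (fun a b => 0 < c a b) x y)
    (htree : ¬ ∃ (ℓ : ℕ) (e : Fin (ℓ + 1) → V × V),
      (∀ i, 0 < c (e i).1 (e i).2) ∧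
      (∀ i, (e i).2 = (e (i + 1)).1) ∧
      Function.Injective e ∧
      (∀ i j, e i ≠ ((e j).2, (e j).1))) :
    ∀ φ : V → V → ℝ, φ ∈ oneForm c → lap1 m c φ = 0 → φ = 0 :=
  tree_lap1_kernel_trivial_general m c hm hsym hnn hconn htree

end
end

section
/- Let Δ be the bounded linear operator on ℓ²(ℤ; ℂ) defined by (Δf)(n) = 2f(n) − f(n−1) − f(n+1). Then the spectrum of Δ is exactly the closed interval [0, 4]. -/
/-!
Let `S` be the unitary translation `(S f) n = f (n - 1)` of `ℓ²(ℤ)`, so that `Δ = 2 - (S + S⋆)`.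
As `S + S⋆` is self-adjoint of norm at most `2`, the spectrum of `Δ` lies in `[0, 4]`.
Conversely, every `μ ∈ [0, 4]` is `2 - 2 cos θ`, and the plane wave `n ↦ e^{inθ}` solves
`Δ w = μ w` pointwise. Its truncations to `[-N, N]` have norm `√(2N + 1)`, while `Δ - μ` maps them
to vectors supported on the four boundary points with bounded entries, so `Δ - μ` is not bounded
below.
-/

open scoped ENNReal
open Filter Complex ContinuousLinearMap

section lpReindex

variable {α β E : Type*} [NormedAddCommGroup E] {p : ℝ≥0∞}

theorem Memℓp.comp_equiv {f : β → E} (hf : Memℓp f p) (e : α ≃ β) : Memℓp (f ∘ e) p := by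
  rcases p.trichotomy with rfl | rfl | hp
  · exact memℓp_zero (hf.finite_dsupport.preimage e.injective.injOn)
  · exact memℓp_infty (e.surjective.range_comp (fun b => ‖f b‖) ▸ hf.bddAbove)
  · exact memℓp_gen ((e.summable_iff (f := fun b => ‖f b‖ ^ p.toReal)).2 (hf.summable hp))

variable (𝕜 : Type*) [NormedField 𝕜] [NormedSpace 𝕜 E] (p) [Fact (1 ≤ p)]

def LinearIsometryEquiv.lpCongrLeft (e : α ≃ β) :
    lp (fun _ : α => E) p ≃ₗᵢ[𝕜] lp (fun _ : β => E) p where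
  toFun f := ⟨f ∘ e.symm, (lp.memℓp f).comp_equiv e.symm⟩
  invFun g := ⟨g ∘ e, (lp.memℓp g).comp_equiv e⟩
  map_add' _ _ := rfl
  map_smul' _ _ := rfl
  left_inv f := lp.ext (funext fun a => by simp)
  right_inv g := lp.ext (funext fun b => by simp)
  norm_map' f := by
    rcases p.trichotomy with rfl | rfl | hp
    · exact absurd (Fact.out : (1 : ℝ≥0∞) ≤ 0) (by norm_num)
    · exact e.symm.iSup_comp (g := fun a => ‖f a‖)
    · simp only [lp.norm_eq_tsum_rpow hp]
      congr 1
      exact e.symm.tsum_eq (fun a => ‖f a‖ ^ p.toReal)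

@[simp]
theorem LinearIsometryEquiv.lpCongrLeft_apply (e : α ≃ β) (f : lp (fun _ : α => E) p) (b : β) :
    LinearIsometryEquiv.lpCongrLeft p 𝕜 e f b = f (e.symm b) := rfl

@[simp]
theorem LinearIsometryEquiv.lpCongrLeft_symm_apply (e : α ≃ β) (g : lp (fun _ : β => E) p) (a : α) :
    (LinearIsometryEquiv.lpCongrLeft p 𝕜 e).symm g a = g (e a) := rfl

end lpReindex

theorem lp.norm_le_sum_norm_of_eq_zero {α : Type*} {E : α → Type*} [∀ i, NormedAddCommGroup (E i)]
    {p : ℝ≥0∞} [Fact (1 ≤ p)] (f : lp E p) (s : Finset α) (hf : ∀ i ∉ s, f i = 0) :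
    ‖f‖ ≤ ∑ i ∈ s, ‖f i‖ := by
  classical
  have hsum : f = ∑ i ∈ s, lp.single p i (f i) := by
    ext j
    rw [lp.coeFn_sum, Finset.sum_apply]
    by_cases hj : j ∈ s <;> simp [lp.single_apply, hj, hf]
  have hp : 0 < p := zero_lt_one.trans_le Fact.out
  calc ‖f‖ = ‖∑ i ∈ s, lp.single p i (f i)‖ := congrArg _ hsum
    _ ≤ ∑ i ∈ s, ‖lp.single p i (f i)‖ := norm_sum_le _ _
    _ = ∑ i ∈ s, ‖f i‖ := by simp only [lp.norm_single hp]

theorem IsSelfAdjoint.spectrum_subset_image_Icc {A : Type*} [CStarAlgebra A] {a : A}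
    (ha : IsSelfAdjoint a) :
    spectrum ℂ a ⊆ Complex.ofReal '' Set.Icc (-‖a‖) ‖a‖ := by
  intro z hz
  have hz_norm : ‖z‖₊ ≤ ‖a‖₊ := ENNReal.coe_le_coe.1 <|
    ha.spectralRadius_eq_nnnorm ▸ le_iSup₂ (f := fun k (_ : k ∈ spectrum ℂ a) => (‖k‖₊ : ℝ≥0∞)) z hz
  have hz_re : z = z.re := ha.mem_spectrum_eq_re hz
  rw [← NNReal.coe_le_coe, coe_nnnorm, coe_nnnorm, hz_re, Complex.norm_real, Real.norm_eq_abs,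
    abs_le] at hz_norm
  exact ⟨z.re, hz_norm, hz_re.symm⟩

theorem mem_spectrum_of_tendsto_norm_atTop {𝕜 E ι : Type*} [NontriviallyNormedField 𝕜]
    [NormedAddCommGroup E] [NormedSpace 𝕜 E] {T : E →L[𝕜] E} {c : 𝕜} {l : Filter ι} [l.NeBot]
    {f : ι → E} {C : ℝ} (hC : ∀ i, ‖T (f i) - c • f i‖ ≤ C)
    (hf : Tendsto (fun i => ‖f i‖) l atTop) : c ∈ spectrum 𝕜 T := by
  rw [spectrum.mem_iff]
  rintro ⟨u, hu⟩
  set B : E →L[𝕜] E := ↑u⁻¹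
  have hbound (i : ι) : ‖f i‖ ≤ ‖B‖ * C := calc
    ‖f i‖ = ‖B (u.val (f i))‖ := by rw [← mul_apply_eq_comp, u.inv_mul, one_apply_eq_self]
    _ ≤ ‖B‖ * ‖u.val (f i)‖ := le_opNorm _ _
    _ ≤ ‖B‖ * C := by
        gcongr
        rw [hu, sub_apply, Algebra.algebraMap_eq_smul_one, smul_apply, one_apply_eq_self,
          norm_sub_rev]
        exact hC i
  obtain ⟨i, hi⟩ := (hf.eventually_gt_atTop (‖B‖ * C)).exists
  exact (hbound i).not_gt hi

namespace DiscreteLaplacian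

local notation "ℓ²ℤ" => lp (fun _ : ℤ => ℂ) 2

noncomputable section

def planeWave (θ : ℝ) (n : ℤ) : ℂ := exp (n * θ * I)

theorem norm_planeWave (θ : ℝ) (n : ℤ) : ‖planeWave θ n‖ = 1 := by
  simpa [planeWave] using norm_exp_ofReal_mul_I (n * θ)

theorem planeWave_sub_one_add_planeWave_add_one (θ : ℝ) (n : ℤ) :
    planeWave θ (n - 1) + planeWave θ (n + 1) = 2 * cos θ * planeWave θ n := by
  have h_sub : ((n - 1 : ℤ) : ℂ) * θ * I = n * θ * I + -θ * I := by push_cast; ring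
  have h_add : ((n + 1 : ℤ) : ℂ) * θ * I = n * θ * I + θ * I := by push_cast; ring
  rw [planeWave, planeWave, planeWave, h_sub, h_add, exp_add, exp_add, cos]
  ring

def truncatedPlaneWave (θ : ℝ) (N : ℕ) : ℓ²ℤ :=
  ∑ n ∈ Finset.Icc (-(N : ℤ)) N, lp.single 2 n (planeWave θ n)

theorem truncatedPlaneWave_apply (θ : ℝ) (N : ℕ) (j : ℤ) :
    truncatedPlaneWave θ N j = if -(N : ℤ) ≤ j ∧ j ≤ N then planeWave θ j else 0 := by
  rw [truncatedPlaneWave, lp.coeFn_sum, Finset.sum_apply]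
  simp [lp.single_apply, Pi.single_apply]

theorem norm_truncatedPlaneWave_apply_le (θ : ℝ) (N : ℕ) (j : ℤ) :
    ‖truncatedPlaneWave θ N j‖ ≤ 1 := by
  rw [truncatedPlaneWave_apply]
  split_ifs
  · exact (norm_planeWave θ j).le
  · simp

theorem norm_truncatedPlaneWave_sq (θ : ℝ) (N : ℕ) :
    ‖truncatedPlaneWave θ N‖ ^ 2 = 2 * N + 1 := by
  have h := lp.norm_sum_single (p := 2) (by norm_num) (planeWave θ) (Finset.Icc (-(N : ℤ)) N)
  simp only [ENNReal.toReal_ofNat, Real.rpow_ofNat, norm_planeWave, one_pow,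
    Finset.sum_const, Int.card_Icc, nsmul_one] at h
  rw [truncatedPlaneWave, h]
  norm_cast
  omega

theorem tendsto_norm_truncatedPlaneWave (θ : ℝ) :
    Tendsto (fun N => ‖truncatedPlaneWave θ N‖) atTop atTop := by
  have h : (fun N => ‖truncatedPlaneWave θ N‖) = fun N : ℕ => √(2 * N + 1) := by
    funext N
    rw [← norm_truncatedPlaneWave_sq, Real.sqrt_sq (norm_nonneg _)]
  rw [h]
  refine Real.tendsto_sqrt_atTop.comp (tendsto_atTop_add_const_right _ _ ?_)
  exact tendsto_natCast_atTop_atTop.const_mul_atTop two_pos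

theorem truncatedPlaneWave_sub_one_add_add_one (θ : ℝ) (N : ℕ) {j : ℤ}
    (hj : j ∉ ({-(N : ℤ) - 1, -(N : ℤ), (N : ℤ), (N : ℤ) + 1} : Finset ℤ)) :
    truncatedPlaneWave θ N (j - 1) + truncatedPlaneWave θ N (j + 1)
      = 2 * cos θ * truncatedPlaneWave θ N j := by
  simp only [Finset.mem_insert, Finset.mem_singleton, not_or] at hj
  simp only [truncatedPlaneWave_apply]
  by_cases hj_int : -(N : ℤ) < j ∧ j < N
  · rw [if_pos (by omega), if_pos (by omega), if_pos (by omega)]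
    exact planeWave_sub_one_add_planeWave_add_one θ j
  · rw [if_neg (by omega), if_neg (by omega), if_neg (by omega)]
    ring

def shift : ℓ²ℤ ≃ₗᵢ[ℂ] ℓ²ℤ := LinearIsometryEquiv.lpCongrLeft 2 ℂ (Equiv.addRight 1)

def laplacian : ℓ²ℤ →L[ℂ] ℓ²ℤ :=
  algebraMap ℂ _ 2 - ((shift : ℓ²ℤ →L[ℂ] ℓ²ℤ) + star (shift : ℓ²ℤ →L[ℂ] ℓ²ℤ))

theorem laplacian_apply (f : ℓ²ℤ) (n : ℤ) :
    laplacian f n = 2 * f n - f (n - 1) - f (n + 1) := by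
  rw [laplacian, LinearIsometryEquiv.star_eq_symm, sub_apply, add_apply,
    Algebra.algebraMap_eq_smul_one, smul_apply, one_apply_eq_self, lp.coeFn_sub, lp.coeFn_add,
    lp.coeFn_smul, Pi.sub_apply, Pi.add_apply, Pi.smul_apply]
  simp [shift, sub_sub, ← sub_eq_add_neg]

theorem spectrum_laplacian_subset : spectrum ℂ laplacian ⊆ ofReal '' Set.Icc 0 4 := by
  set S : ℓ²ℤ →L[ℂ] ℓ²ℤ := ↑shift
  have hS_norm : ‖S + star S‖ ≤ 2 := calc
    ‖S + star S‖ ≤ ‖S‖ + ‖star S‖ := norm_add_le _ _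
    _ = 2 * ‖S‖ := by rw [norm_star S]; ring
    _ ≤ 2 := by linarith [opNorm_le_bound S zero_le_one fun f => by simp [S]]
  rw [laplacian, ← spectrum.singleton_sub_eq]
  rintro _ ⟨_, rfl, z, hz, rfl⟩
  obtain ⟨t, ht, rfl⟩ := (IsSelfAdjoint.add_star_self S).spectrum_subset_image_Icc hz
  exact ⟨2 - t, ⟨by linarith [ht.2], by linarith [ht.1]⟩, by push_cast; ring⟩

theorem norm_laplacian_truncatedPlaneWave_sub_le (θ : ℝ) (N : ℕ) :
    ‖laplacian (truncatedPlaneWave θ N) - (2 - 2 * cos θ) • truncatedPlaneWave θ N‖ ≤ 16 := by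
  set f := truncatedPlaneWave θ N
  set s : Finset ℤ := {-(N : ℤ) - 1, -(N : ℤ), (N : ℤ), (N : ℤ) + 1}
  have h_apply (j : ℤ) : (laplacian f - (2 - 2 * cos θ) • f) j
      = 2 * cos θ * f j - (f (j - 1) + f (j + 1)) := by
    rw [lp.coeFn_sub, lp.coeFn_smul, Pi.sub_apply, Pi.smul_apply, laplacian_apply, smul_eq_mul]
    ring
  have h_cos : ‖cos θ‖ ≤ 1 := by
    rw [← ofReal_cos, norm_real, Real.norm_eq_abs]
    exact Real.abs_cos_le_one θ
  have h_le (j : ℤ) : ‖(laplacian f - (2 - 2 * cos θ) • f) j‖ ≤ 4 := by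
    rw [h_apply]
    have := norm_truncatedPlaneWave_apply_le θ N
    calc _ ≤ ‖2 * cos θ * f j‖ + (‖f (j - 1)‖ + ‖f (j + 1)‖) :=
          (norm_sub_le _ _).trans (by gcongr; exact norm_add_le _ _)
      _ ≤ 2 * 1 * 1 + (1 + 1) := by
          rw [norm_mul, norm_mul, Complex.norm_two]
          gcongr <;> exact this _
      _ = 4 := by norm_num
  calc _ ≤ ∑ j ∈ s, ‖(laplacian f - (2 - 2 * cos θ) • f) j‖ := by
        refine lp.norm_le_sum_norm_of_eq_zero _ s fun j hj => ?_
        rw [h_apply, ← truncatedPlaneWave_sub_one_add_add_one θ N hj, sub_self]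
    _ ≤ s.card • 4 := Finset.sum_le_card_nsmul _ _ _ fun j _ => h_le j
    _ ≤ 4 • 4 := by gcongr; exact Finset.card_le_four
    _ = 16 := by norm_num

theorem two_sub_two_mul_cos_mem_spectrum_laplacian (θ : ℝ) :
    2 - 2 * cos θ ∈ spectrum ℂ laplacian :=
  mem_spectrum_of_tendsto_norm_atTop (norm_laplacian_truncatedPlaneWave_sub_le θ)
    (tendsto_norm_truncatedPlaneWave θ)

theorem image_Icc_subset_spectrum_laplacian : ofReal '' Set.Icc 0 4 ⊆ spectrum ℂ laplacian := by
  rintro _ ⟨μ, ⟨hμ₀, hμ₄⟩, rfl⟩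
  have h_cos : Real.cos (Real.arccos (1 - μ / 2)) = 1 - μ / 2 :=
    Real.cos_arccos (by linarith) (by linarith)
  convert two_sub_two_mul_cos_mem_spectrum_laplacian (Real.arccos (1 - μ / 2)) using 1
  rw [← ofReal_cos, h_cos]
  push_cast
  ring

end

end DiscreteLaplacian

/-- Let `Δ` be the bounded linear operator on `ℓ²(ℤ; ℂ)` defined by
`(Δf)(n) = 2 f(n) - f(n-1) - f(n+1)` (the 0-form Laplacian of the simple graph `ℤ`
with all weights equal to `1`).  Then the spectrum of `Δ` is exactly the closed real
interval `[0, 4]`. -/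
theorem spectrum_discrete_laplacian_int
    (Δ : lp (fun _ : ℤ => ℂ) 2 →L[ℂ] lp (fun _ : ℤ => ℂ) 2)
    (hΔ : ∀ (f : lp (fun _ : ℤ => ℂ) 2) (n : ℤ),
      (Δ f : ℤ → ℂ) n = 2 * (f : ℤ → ℂ) n - (f : ℤ → ℂ) (n - 1) - (f : ℤ → ℂ) (n + 1)) :
    spectrum ℂ Δ = Complex.ofReal '' Set.Icc (0 : ℝ) 4 := by
  obtain rfl : Δ = DiscreteLaplacian.laplacian := by
    ext f n
    rw [hΔ, DiscreteLaplacian.laplacian_apply]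
  exact DiscreteLaplacian.spectrum_laplacian_subset.antisymm
    DiscreteLaplacian.image_Icc_subset_spectrum_laplacian
end

section
/- For every finitely supported function f : ℤ → ℝ, one has (1/4) Σ_{k∈ℤ} f(k)² ≤ Σ_{k∈ℤ} (k² + 1)·(f(k−1) − f(k))². Consequently, for the weighted graph on ℤ with edges (n,n+1), vertex weight m ≡ 1 and edge weight c(n,n+1) = (n+1)²+1, the quadratic form of the 0-form Laplacian satisfies ⟨Δ₀f, f⟩ ≥ (1/4)‖f‖² for all finitely supported f, so 0 is not in the spectrum of Δ₀. -/
/-!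
Summation by parts gives `Σ f(k)² = Σ k (f(k-1)² - f(k)²) = Σ k (f(k-1) - f(k)) (f(k-1) + f(k))`.
By Cauchy–Schwarz and `Σ (f(k-1) + f(k))² ≤ 4 Σ f(k)²`, this yields `‖f‖⁴ ≤ 4 ‖f‖² Σ k² (f(k-1) - f(k))²`,
the discrete Hardy inequality `‖f‖² ≤ 4 Σ k² (f(k-1) - f(k))²`; the weight `k² + 1` only helps.
-/

open Function

theorem finsum_comp_sub_right {G M : Type*} [AddGroup G] [AddCommMonoid M] (g : G → M) (c : G) :
    ∑ᶠ x, g (x - c) = ∑ᶠ x, g x :=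
  finsum_comp_equiv (Equiv.subRight c)

theorem finsum_mul_sq_le_sq_mul_sq {ι R : Type*} [CommSemiring R] [LinearOrder R]
    [IsStrictOrderedRing R] [ExistsAddOfLE R] {f g : ι → R} (hf : HasFiniteSupport f)
    (hg : HasFiniteSupport g) :
    (∑ᶠ i, f i * g i) ^ 2 ≤ (∑ᶠ i, f i ^ 2) * ∑ᶠ i, g i ^ 2 := by
  classical
  set s := (hf.union hg).toFinset
  have hfs : support f ⊆ s := by simp [s]
  have hgs : support g ⊆ s := by simp [s]
  have hsq {h : ι → R} (hs : support h ⊆ s) : support (fun i => h i ^ 2) ⊆ s :=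
    fun i hi => hs fun h0 => hi (by simp [h0])
  rw [finsum_eq_sum_of_support_subset _ ((support_mul_subset_left f g).trans hfs),
    finsum_eq_sum_of_support_subset _ (hsq hfs), finsum_eq_sum_of_support_subset _ (hsq hgs)]
  exact Finset.sum_mul_sq_le_sq_mul_sq s f g

section Int

variable {f : ℤ → ℝ}

theorem finsum_sq_eq_finsum_mul_sub_mul_add (hf : HasFiniteSupport f) :
    ∑ᶠ k, f k ^ 2 = ∑ᶠ k : ℤ, (k * (f (k - 1) - f k)) * (f (k - 1) + f k) := by
  calc ∑ᶠ k, f k ^ 2 = ∑ᶠ k : ℤ, (((k : ℝ) + 1) * f k ^ 2 - k * f k ^ 2) :=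
        finsum_congr fun k => by ring
    _ = ∑ᶠ k : ℤ, ((k : ℝ) + 1) * f k ^ 2 - ∑ᶠ k : ℤ, k * f k ^ 2 :=
        finsum_sub_distrib (by fun_prop (disch := simp)) (by fun_prop (disch := simp))
    _ = ∑ᶠ k : ℤ, k * f (k - 1) ^ 2 - ∑ᶠ k : ℤ, k * f k ^ 2 := by
        rw [← finsum_comp_sub_right _ 1]
        push_cast
        simp only [sub_add_cancel]
    _ = ∑ᶠ k : ℤ, (k * (f (k - 1) - f k)) * (f (k - 1) + f k) := by
        rw [← finsum_sub_distrib (by fun_prop (disch := simp [sub_left_injective]))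
          (by fun_prop (disch := simp))]
        exact finsum_congr fun k => by ring

theorem finsum_sq_comp_sub_one_add_le (hf : HasFiniteSupport f) :
    ∑ᶠ k : ℤ, (f (k - 1) + f k) ^ 2 ≤ 4 * ∑ᶠ k, f k ^ 2 := by
  calc ∑ᶠ k : ℤ, (f (k - 1) + f k) ^ 2 ≤ ∑ᶠ k : ℤ, (2 * f (k - 1) ^ 2 + 2 * f k ^ 2) :=
        finsum_le_finsum' (by fun_prop (disch := simp [sub_left_injective]))
          (by fun_prop (disch := simp [sub_left_injective]))
          fun k => by nlinarith [sq_nonneg (f (k - 1) - f k)]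
    _ = 2 * ∑ᶠ k : ℤ, f (k - 1) ^ 2 + 2 * ∑ᶠ k, f k ^ 2 := by
        rw [finsum_add_distrib (by fun_prop (disch := simp [sub_left_injective]))
          (by fun_prop (disch := simp)), mul_finsum, mul_finsum]
    _ = 4 * ∑ᶠ k, f k ^ 2 := by
        rw [finsum_comp_sub_right (fun k => f k ^ 2)]
        ring

theorem finsum_sq_le_four_mul_finsum_mul_sub_sq (hf : HasFiniteSupport f) :
    ∑ᶠ k, f k ^ 2 ≤ 4 * ∑ᶠ k : ℤ, (k * (f (k - 1) - f k)) ^ 2 := by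
  set S := ∑ᶠ k, f k ^ 2
  set T := ∑ᶠ k : ℤ, (k * (f (k - 1) - f k)) ^ 2
  have hS : 0 ≤ S := finsum_nonneg fun k => sq_nonneg _
  have hT : 0 ≤ T := finsum_nonneg fun k => sq_nonneg _
  have hS_sq : S ^ 2 ≤ T * (4 * S) :=
    calc S ^ 2 = (∑ᶠ k : ℤ, (k * (f (k - 1) - f k)) * (f (k - 1) + f k)) ^ 2 := by
          rw [← finsum_sq_eq_finsum_mul_sub_mul_add hf]
      _ ≤ T * ∑ᶠ k : ℤ, (f (k - 1) + f k) ^ 2 :=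
          finsum_mul_sq_le_sq_mul_sq (by fun_prop (disch := simp [sub_left_injective]))
            (by fun_prop (disch := simp [sub_left_injective]))
      _ ≤ T * (4 * S) := mul_le_mul_of_nonneg_left (finsum_sq_comp_sub_one_add_le hf) hT
  nlinarith

end Int

/-- For every finitely supported `f : ℤ → ℝ`,
`(1/4) Σ_k f(k)² ≤ Σ_k (k² + 1)(f(k-1) - f(k))²`.  Consequently, for the weighted graph
on `ℤ` with edges `(n, n+1)`, vertex weight `m ≡ 1` and edge weight `c(n, n+1) = (n+1)² + 1`,
the quadratic form of the 0-form Laplacian satisfies `⟨Δ₀ f, f⟩ ≥ (1/4)‖f‖²` on finitely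
supported functions, so `0` is not in the spectrum of `Δ₀`. -/
theorem quadratic_form_bound_G1 (f : ℤ → ℝ) (hf : (Function.support f).Finite) :
    (1 / 4) * ∑ᶠ k : ℤ, f k ^ 2
      ≤ ∑ᶠ k : ℤ, ((k : ℝ) ^ 2 + 1) * (f (k - 1) - f k) ^ 2 := by
  replace hf : HasFiniteSupport f := hf
  calc (1 / 4) * ∑ᶠ k : ℤ, f k ^ 2 ≤ ∑ᶠ k : ℤ, (k * (f (k - 1) - f k)) ^ 2 := by
        linarith [finsum_sq_le_four_mul_finsum_mul_sub_sq hf]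
    _ ≤ ∑ᶠ k : ℤ, ((k : ℝ) ^ 2 + 1) * (f (k - 1) - f k) ^ 2 :=
        finsum_le_finsum' (by fun_prop (disch := simp [sub_left_injective]))
          (by fun_prop (disch := simp [sub_left_injective]))
          fun k => by nlinarith [sq_nonneg (f (k - 1) - f k)]
end

section
/- Consider the weighted graph on ℤ with edges (n,n+1), vertex weight m ≡ 1 and edge weight c(n,n+1) = (n+1)² + 1. Then 0 is an eigenvalue of the 1-form Laplacian Δ₁: there exists a nonzero sequence (ψ(n))_{n∈ℤ}, where ψ(n) denotes the value of a 1-form on the edge (n, n+1), such that Σ_{n∈ℤ} ((n+1)² + 1)·ψ(n)² < ∞ and ((n+1)² + 1)·ψ(n) = (n² + 1)·ψ(n−1) for all n ∈ ℤ (i.e., δψ = 0, hence Δ₁ψ = 0). Explicitly, ψ(n) = 1/((n+1)² + 1) works. -/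
/-!
Take `ψ = 1 / c` for the edge weight `c n = (n + 1)² + 1`. Then `c ψ ≡ 1`, so the coboundary
`c(n-1,n) ψ(n-1) - c(n,n+1) ψ(n)` vanishes identically, and `c ψ² = 1 / c`, which is summable
over `ℤ` by comparison with `1 / (n + 1)²`.
-/

lemma summable_one_div_int_add_sq_add_one (a : ℝ) :
    Summable fun n : ℤ => 1 / (((n : ℝ) + a) ^ 2 + 1) := by
  refine .of_norm_bounded_eventually ((Real.summable_one_div_int_add_rpow a 2).mpr one_lt_two) ?_
  -- the comparison term `1 / |n + a| ^ 2` is `0` (not `∞`) at `n = -a`, so it holds only cofinitely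
  have hzero : {n : ℤ | (n : ℝ) + a = 0}.Finite :=
    Set.Subsingleton.finite fun m hm k hk => Int.cast_injective (α := ℝ) <| by
      simp only [Set.mem_ofPred_eq] at hm hk
      linarith
  filter_upwards [hzero.compl_mem_cofinite] with n hn
  have hpos : 0 < ((n : ℝ) + a) ^ 2 := sq_pos_of_ne_zero hn
  rw [Real.norm_of_nonneg (by positivity), Real.rpow_two, sq_abs]
  exact one_div_le_one_div_of_le hpos (by linarith)

/-- For the weighted graph on `ℤ` with edges `(n, n+1)`, vertex weight
`m ≡ 1` and edge weight `c(n, n+1) = (n+1)² + 1`, `0` is an eigenvalue of the 1-form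
Laplacian `Δ₁`: the sequence `ψ(n) = 1/((n+1)² + 1)` (the value of a 1-form on the edge
`(n, n+1)`) is nonzero, satisfies `Σ_n ((n+1)² + 1) ψ(n)² < ∞` (it lies in `ℓ²(E)`), and
`((n+1)² + 1) ψ(n) = (n² + 1) ψ(n-1)` for all `n ∈ ℤ` (i.e. `δψ = 0`, hence `Δ₁ψ = 0`). -/
theorem zero_eigenvalue_lap1_G1 :
    ∃ ψ : ℤ → ℝ,
      (∀ n : ℤ, ψ n = 1 / (((n : ℝ) + 1) ^ 2 + 1)) ∧
      ψ ≠ 0 ∧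
      (Summable fun n : ℤ => (((n : ℝ) + 1) ^ 2 + 1) * ψ n ^ 2) ∧
      (∀ n : ℤ, (((n : ℝ) + 1) ^ 2 + 1) * ψ n = ((n : ℝ) ^ 2 + 1) * ψ (n - 1)) := by
  set c : ℤ → ℝ := fun n => ((n : ℝ) + 1) ^ 2 + 1
  have hc : ∀ n, c n ≠ 0 := fun n => by positivity
  refine ⟨fun n => 1 / c n, fun n => rfl, Function.ne_iff.mpr ⟨0, by simp [c]⟩, ?_, fun n => ?_⟩
  · refine (summable_one_div_int_add_sq_add_one 1).congr fun n => ?_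
    simp only [c]
    field_simp
  · have hc_pred : c (n - 1) = (n : ℝ) ^ 2 + 1 := by simp [c]
    rw [← hc_pred, mul_one_div_cancel (hc n), mul_one_div_cancel (hc (n - 1))]
end

section
/- Let c : ℤ → (0,∞), where c(n) is the weight of the edge (n, n+1) in the graph ℤ with vertex weight m ≡ 1. Suppose there exist a function A : ℤ → ℝ and a constant a > 0 such that A(n) − A(n−1) ≥ a and A(n)² = c(n) for all n ∈ ℤ. Then for every finitely supported function f : ℤ → ℝ, (a²/4) Σ_{n∈ℤ} f(n)² ≤ Σ_{n∈ℤ} c(n)·(f(n) − f(n+1))². Consequently the quadratic form of the 0-form Laplacian Δ₀ is bounded below by a²/4, so the spectrum of (the self-adjoint extension of) Δ₀ is contained in [a²/4, ∞). -/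
/-!
Summation by parts turns `a ∑ f(n)² ≤ ∑ (A(n) - A(n-1)) f(n)²` into
`∑ A(n) (f(n) - f(n+1)) (f(n) + f(n+1))`. Weighted AM–GM bounds each term by
`(2/a) c(n) (f(n) - f(n+1))² + (a/4) (f(n)² + f(n+1)²)`, so `a ∑ f² ≤ (2/a) Q + (a/2) ∑ f²`,
where `Q` is the quadratic form; this rearranges to `(a²/4) ∑ f² ≤ Q`.
-/

open Function

theorem Function.HasFiniteSupport.of_eq_zero_of_eq_zero_add {G M N : Type*} [AddGroup G]
    [Zero M] [Zero N] {f : G → M} (hf : f.HasFiniteSupport) (k : G) {g : G → N}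
    (h : ∀ n, f n = 0 → f (n + k) = 0 → g n = 0) : g.HasFiniteSupport :=
  (hf.union (hf.comp_of_injective (add_left_injective k))).subset fun n hn => by
    by_contra hnot
    simp only [Set.mem_union, mem_support, comp_apply, not_or, not_not] at hnot
    exact hn (h n hnot.1 hnot.2)

theorem finsum_comp_add_right {G M : Type*} [AddGroup G] [AddCommMonoid M] (g : G → M) (k : G) :
    ∑ᶠ n, g (n + k) = ∑ᶠ n, g n :=
  finsum_comp_equiv (Equiv.addRight k)

theorem finsum_sub_mul_eq_finsum_mul_sub {G R : Type*} [AddGroup G] [CommRing R]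
    {u : G → R} (hu : u.HasFiniteSupport) (A : G → R) (k : G) :
    ∑ᶠ n, (A n - A (n - k)) * u n = ∑ᶠ n, A n * (u n - u (n + k)) := by
  have hfin : ∀ g : G → R, (∀ n, u n = 0 → u (n + k) = 0 → g n = 0) → g.HasFiniteSupport :=
    fun _ => hu.of_eq_zero_of_eq_zero_add k
  have hshift : ∑ᶠ n, A n * u (n + k) = ∑ᶠ n, A (n - k) * u n := by
    simpa using finsum_comp_add_right (fun n => A (n - k) * u n) k
  simp only [sub_mul, mul_sub]
  rw [finsum_sub_distrib, finsum_sub_distrib, hshift]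
  all_goals exact hfin _ fun n h0 h1 => by simp [h0, h1]

theorem mul_sq_sub_sq_le {K : Type*} [Field K] [LinearOrder K] [IsStrictOrderedRing K]
    {a : K} (ha : 0 < a) (A x y : K) :
    A * (x ^ 2 - y ^ 2) ≤ 2 / a * (A ^ 2 * (x - y) ^ 2) + a / 4 * (x ^ 2 + y ^ 2) := by
  have hsq : 2 / a * (A ^ 2 * (x - y) ^ 2) + a / 4 * (x ^ 2 + y ^ 2) - A * (x ^ 2 - y ^ 2) =
      2 / a * (A * (x - y) - a / 4 * (x + y)) ^ 2 + a / 8 * (x - y) ^ 2 := by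
    field_simp
    ring
  have : 0 ≤ 2 / a * (A * (x - y) - a / 4 * (x + y)) ^ 2 + a / 8 * (x - y) ^ 2 := by positivity
  linarith

theorem quadratic_form_lower_bound_of_sqrt_weight_general
    (c : ℤ → ℝ)
    (A : ℤ → ℝ) (a : ℝ) (ha : 0 < a)
    (hA1 : ∀ n : ℤ, a ≤ A n - A (n - 1))
    (hA2 : ∀ n : ℤ, A n ^ 2 = c n) :
    ∀ f : ℤ → ℝ, (Function.support f).Finite →
      (a ^ 2 / 4) * ∑ᶠ n : ℤ, f n ^ 2 ≤ ∑ᶠ n : ℤ, c n * (f n - f (n + 1)) ^ 2 := by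
  intro f hf
  have hfin : ∀ g : ℤ → ℝ, (∀ n, f n = 0 → f (n + 1) = 0 → g n = 0) → g.HasFiniteSupport :=
    fun _ => HasFiniteSupport.of_eq_zero_of_eq_zero_add hf 1
  set S := ∑ᶠ n, f n ^ 2
  set Q := ∑ᶠ n, c n * (f n - f (n + 1)) ^ 2
  have hf2 : (fun n => f n ^ 2).HasFiniteSupport := hfin _ fun n h0 _ => by simp [h0]
  have key : a * S ≤ 2 / a * Q + a / 4 * (S + S) := by
    calc a * S = ∑ᶠ n, a * f n ^ 2 := mul_finsum _ _
      _ ≤ ∑ᶠ n, (A n - A (n - 1)) * f n ^ 2 :=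
        finsum_le_finsum' ?_ ?_ fun n => mul_le_mul_of_nonneg_right (hA1 n) (sq_nonneg _)
      _ = ∑ᶠ n, A n * (f n ^ 2 - f (n + 1) ^ 2) := finsum_sub_mul_eq_finsum_mul_sub hf2 A 1
      _ ≤ ∑ᶠ n, (2 / a * (c n * (f n - f (n + 1)) ^ 2) + a / 4 * (f n ^ 2 + f (n + 1) ^ 2)) :=
        finsum_le_finsum' ?_ ?_ fun n => hA2 n ▸ mul_sq_sub_sq_le ha (A n) (f n) (f (n + 1))
      _ = 2 / a * Q + a / 4 * (S + S) := by
        rw [finsum_add_distrib ?_ ?_, ← mul_finsum, ← mul_finsum, finsum_add_distrib hf2 ?_,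
          finsum_comp_add_right (fun n => f n ^ 2)] <;>
        exact hfin _ fun n h0 h1 => by simp [h0, h1]
    all_goals exact hfin _ fun n h0 h1 => by simp [h0, h1]
  calc a ^ 2 / 4 * S = a / 2 * (a * S - a / 4 * (S + S)) := by ring
    _ ≤ a / 2 * (2 / a * Q) := by gcongr; linarith
    _ = Q := by field_simp

/-- Let `c : ℤ → (0, ∞)`, where `c(n)` is the weight of the edge
`(n, n+1)` in the graph `ℤ` with vertex weight `m ≡ 1`.  If there are a function
`A : ℤ → ℝ` and a constant `a > 0` with `A(n) - A(n-1) ≥ a` and `A(n)² = c(n)` for all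
`n`, then for every finitely supported `f : ℤ → ℝ`,
`(a²/4) Σ_n f(n)² ≤ Σ_n c(n)(f(n) - f(n+1))²`: the quadratic form of the 0-form Laplacian
`Δ₀` is bounded below by `a²/4`, so the spectrum of (the self-adjoint extension of) `Δ₀`
is contained in `[a²/4, ∞)`. -/
theorem quadratic_form_lower_bound_of_sqrt_weight
    (c : ℤ → ℝ) (hc : ∀ n, 0 < c n)
    (A : ℤ → ℝ) (a : ℝ) (ha : 0 < a)
    (hA1 : ∀ n : ℤ, a ≤ A n - A (n - 1))
    (hA2 : ∀ n : ℤ, A n ^ 2 = c n) :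
    ∀ f : ℤ → ℝ, (Function.support f).Finite →
      (a ^ 2 / 4) * ∑ᶠ n : ℤ, f n ^ 2 ≤ ∑ᶠ n : ℤ, c n * (f n - f (n + 1)) ^ 2 :=
  quadratic_form_lower_bound_of_sqrt_weight_general c A a ha hA1 hA2
end

section
/- Consider the weighted graph G₂ with vertex set ℤ, edge set E₂ = {(x,y) : |x−y| = 1} ∪ {(x,−x) : x ≠ 0}, vertex weight m ≡ 1, and edge weights c(n,n+1) = (n+1)² + 1 and c(n,−n) = 1. Then: (i) for every finitely supported f : ℤ → ℝ, (1/4) Σ_{k∈ℤ} f(k)² ≤ Σ_{k∈ℤ} (k²+1)(f(k−1)−f(k))² + Σ_{k∈ℤ, k≠0} (f(k)−f(−k))² = ⟨Δ₀f, f⟩, so 0 is not in the spectrum of Δ₀; and (ii) 0 is an eigenvalue of the 1-form Laplacian Δ₁ of infinite multiplicity: the 1-forms φ_k (k ≥ 1), where φ_k takes the value 1/c(e) on each edge e of the cycle C_k and 0 on edges not in C_k or its reversal, with C₁ = ((0,1),(1,−1),(−1,0)) and C_k = ((k−1,k),(k,−k),(−k,−k+1),(−k+1,k−1)) for k ≥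 2, form an infinite linearly independent family in ℓ²(E₂) satisfying δφ_k = 0, hence Δ₁φ_k = 0. -/
/-!
(i) The cross terms are nonnegative, so it suffices to prove the discrete Hardy inequality
`∑ f k ^ 2 ≤ 4 ∑ k ^ 2 (f (k - 1) - f k) ^ 2`. Abel summation gives
`∑ f k ^ 2 = ∑ k (f (k - 1) ^ 2 - f k ^ 2)`, and the pointwise bound
`k (x² - y²) ≤ 2 k² (x - y)² + (x² + y²) / 4` (the difference is `(4k(x - y) - (x + y))² / 8`
plus `(x - y)² / 8`) sums to `∑ f ^ 2 ≤ 2 ∑ k ^ 2 (f (k - 1) - f k) ^ 2 + (∑ f ^ 2) / 2`.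

(ii) `c · φ_k` is the indicator of `C_k` minus that of its reversal, so `δφ_k (x)` is the
in-degree minus the out-degree of `x` in `C_k`, which vanishes because `C_k` is a closed walk
through distinct vertices. The edge `(k - 1, k)` lies on `C_k` and on no other cycle, so the
flux through the edges `(i, i + 1)`, `i ≥ 0`, sends the `φ_k` to the standard basis vectors.
-/

noncomputable section

/-- The edge weight of the graph `G₂` on `ℤ`: edges are the pairs at distance `1`, with
`c(n, n+1) = (n+1)² + 1`, together with the pairs `(x, -x)` for `x ≠ 0`, with weight `1`. -/
def cG2 : ℤ → ℤ → ℝ := fun x y =>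
  if |x - y| = 1 then ((max x y : ℤ) : ℝ) ^ 2 + 1
  else if x = -y ∧ x ≠ 0 then 1 else 0

/-- The cycles `C₁ = ((0,1), (1,-1), (-1,0))` and
`C_k = ((k-1, k), (k, -k), (-k, -k+1), (-k+1, k-1))` for `k ≥ 2`, as sets of
oriented edges. -/
def cyc (k : ℕ) : Set (ℤ × ℤ) :=
  if k = 1 then {(0, 1), (1, -1), (-1, 0)}
  else {((k : ℤ) - 1, (k : ℤ)), ((k : ℤ), -(k : ℤ)),
        (-(k : ℤ), -(k : ℤ) + 1), (-(k : ℤ) + 1, (k : ℤ) - 1)}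

open Classical in
/-- The 1-form `φ_k` attached to the cycle `C_k`: it takes the value `1/c(e)` on each
edge `e` of `C_k`, `-1/c(e)` on the reversed edges, and `0` on all other pairs. -/
def phiG2 (k : ℕ) : ℤ → ℤ → ℝ := fun x y =>
  if (x, y) ∈ cyc k then 1 / cG2 x y
  else if (y, x) ∈ cyc k then -(1 / cG2 x y)
  else 0

open Function

lemma finsum_comp_sub_one {M : Type*} [AddCommMonoid M] (g : ℤ → M) :
    ∑ᶠ k, g (k - 1) = ∑ᶠ k, g k :=
  finsum_comp_equiv (Equiv.subRight 1)

lemma mul_sq_sub_sq_le_s19 (k x y : ℝ) :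
    k * (x ^ 2 - y ^ 2) ≤ 2 * (k ^ 2 * (x - y) ^ 2) + x ^ 2 / 4 + y ^ 2 / 4 := by
  nlinarith [sq_nonneg (4 * k * (x - y) - (x + y)), sq_nonneg (x - y)]

lemma finsum_sq_eq_finsum_mul_sub_sq {f : ℤ → ℝ} (hf : f.HasFiniteSupport) :
    ∑ᶠ k, f k ^ 2 = ∑ᶠ k : ℤ, (k : ℝ) * (f (k - 1) ^ 2 - f k ^ 2) := by
  have hshift : ∑ᶠ k : ℤ, (k : ℝ) * f (k - 1) ^ 2 = ∑ᶠ k : ℤ, ((k : ℝ) + 1) * f k ^ 2 := by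
    rw [← finsum_comp_sub_one fun k : ℤ => ((k : ℝ) + 1) * f k ^ 2]
    push_cast
    simp only [sub_add_cancel]
  simp only [mul_sub]
  rw [finsum_sub_distrib, hshift, ← finsum_sub_distrib]
  · simp only [add_mul, one_mul, add_sub_cancel_left]
  all_goals fun_prop (disch := first | exact sub_left_injective | simp)

theorem finsum_sq_le_four_mul_finsum {f : ℤ → ℝ} (hf : f.HasFiniteSupport) :
    ∑ᶠ k, f k ^ 2 ≤ 4 * ∑ᶠ k : ℤ, (k : ℝ) ^ 2 * (f (k - 1) - f k) ^ 2 := by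
  have hbound : ∑ᶠ k : ℤ, (k : ℝ) * (f (k - 1) ^ 2 - f k ^ 2)
      ≤ ∑ᶠ k : ℤ, (2 * ((k : ℝ) ^ 2 * (f (k - 1) - f k) ^ 2) + f (k - 1) ^ 2 / 4 + f k ^ 2 / 4) := by
    refine finsum_le_finsum' ?_ ?_ fun k => mul_sq_sub_sq_le_s19 k (f (k - 1)) (f k)
    all_goals fun_prop (disch := first | exact sub_left_injective | simp)
  rw [finsum_add_distrib, finsum_add_distrib, ← mul_finsum, finsum_comp_sub_one fun k => f k ^ 2 / 4,
    ← finsum_sq_eq_finsum_mul_sub_sq hf] at hbound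
  · simp only [div_eq_mul_inv, ← finsum_mul] at hbound
    linarith
  all_goals fun_prop (disch := first | exact sub_left_injective | simp)

section ClosedWalk

variable {V : Type*} {n : ℕ} [NeZero n] {v : Fin n → V}

def closedWalkEdges (v : Fin n → V) : Set (V × V) := Set.range fun i => (v i, v (i + 1))

lemma mk_apply_left_mem_closedWalkEdges_iff (hv : Injective v) (i : Fin n) (x : V) :
    (v i, x) ∈ closedWalkEdges v ↔ v (i + 1) = x :=
  ⟨fun ⟨j, hj⟩ => by obtain rfl := hv (Prod.ext_iff.1 hj).1; exact (Prod.ext_iff.1 hj).2,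
    fun h => ⟨i, h ▸ rfl⟩⟩

lemma mk_apply_right_mem_closedWalkEdges_iff (hv : Injective v) (i : Fin n) (x : V) :
    (x, v i) ∈ closedWalkEdges v ↔ v (i - 1) = x :=
  ⟨fun ⟨j, hj⟩ => by
    obtain rfl := hv (Prod.ext_iff.1 hj).2; simpa using (Prod.ext_iff.1 hj).1,
    fun h => ⟨i - 1, by simp [h]⟩⟩

theorem finsum_indicator_closedWalkEdges_sub (hv : Injective v) (x : V) :
    ∑ᶠ y, ((closedWalkEdges v).indicator 1 (y, x) - (closedWalkEdges v).indicator 1 (x, y) : ℝ)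
      = 0 := by
  classical
  have hsupp : support (fun y => ((closedWalkEdges v).indicator 1 (y, x)
      - (closedWalkEdges v).indicator 1 (x, y) : ℝ)) ⊆ Finset.univ.image v := by
    intro y hy
    by_contra hyv
    simp only [Finset.coe_image, Finset.coe_univ, Set.image_univ] at hyv
    refine hy ?_
    show _ - _ = _
    rw [Set.indicator_of_notMem, Set.indicator_of_notMem, sub_zero]
    · rintro ⟨i, hi⟩; exact hyv ⟨i + 1, (Prod.ext_iff.1 hi).2⟩
    · rintro ⟨i, hi⟩; exact hyv ⟨i, (Prod.ext_iff.1 hi).1⟩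
  rw [finsum_eq_sum_of_support_subset _ hsupp, Finset.sum_image fun i _ j _ h => hv h]
  simp only [Set.indicator_apply, mk_apply_left_mem_closedWalkEdges_iff hv, mk_apply_right_mem_closedWalkEdges_iff hv,
    Pi.one_apply, Finset.sum_sub_distrib]
  rw [sub_eq_zero]
  exact (Equiv.sum_comp (Equiv.addRight 1) fun i => if v i = x then (1 : ℝ) else 0).trans
    (Equiv.sum_comp (Equiv.subRight 1) _).symm

end ClosedWalk

lemma cG2_symm (x y : ℤ) : cG2 x y = cG2 y x := by
  simp only [cG2, abs_sub_comm x y, max_comm x y]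
  split_ifs <;> first | rfl | (exfalso; omega)

lemma cG2_pos {x y : ℤ} (h : y = x + 1 ∨ x = y + 1 ∨ (y = -x ∧ x ≠ 0)) : 0 < cG2 x y := by
  unfold cG2
  split_ifs with hstep hcross
  · positivity
  · exact one_pos
  · rw [abs_eq zero_le_one] at hstep
    omega

lemma mem_cyc_one {p : ℤ × ℤ} : p ∈ cyc 1 ↔ p = (0, 1) ∨ p = (1, -1) ∨ p = (-1, 0) := by
  simp [cyc]

lemma mem_cyc_of_two_le {k : ℕ} (hk : 2 ≤ k) {p : ℤ × ℤ} :
    p ∈ cyc k ↔ p = ((k : ℤ) - 1, (k : ℤ)) ∨ p = ((k : ℤ), -(k : ℤ)) ∨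
      p = (-(k : ℤ), -(k : ℤ) + 1) ∨ p = (-(k : ℤ) + 1, (k : ℤ) - 1) := by
  simp [cyc, show k ≠ 1 by omega]

lemma cG2_pos_of_mem_cyc {k : ℕ} (hk : 1 ≤ k) {p : ℤ × ℤ} (hp : p ∈ cyc k) :
    0 < cG2 p.1 p.2 := by
  apply cG2_pos
  rcases (by omega : k = 1 ∨ 2 ≤ k) with rfl | hk2
  · rcases mem_cyc_one.1 hp with rfl | rfl | rfl <;> norm_num
  · rcases (mem_cyc_of_two_le hk2).1 hp with rfl | rfl | rfl | rfl <;> omega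

lemma swap_notMem_cyc {k : ℕ} (hk : 1 ≤ k) {x y : ℤ} (h : (x, y) ∈ cyc k) : (y, x) ∉ cyc k := by
  intro h'
  rcases (by omega : k = 1 ∨ 2 ≤ k) with rfl | hk2
  · simp only [mem_cyc_one, Prod.ext_iff] at h h'; omega
  · simp only [mem_cyc_of_two_le hk2, Prod.ext_iff] at h h'; omega

lemma cyc_finite (k : ℕ) : (cyc k).Finite := by
  unfold cyc; split_ifs <;> exact Set.toFinite _

lemma support_phiG2_finite (k : ℕ) : (support fun p : ℤ × ℤ => phiG2 k p.1 p.2).Finite := by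
  refine ((cyc_finite k).union ((cyc_finite k).preimage Prod.swap_injective.injOn)).subset ?_
  rintro ⟨x, y⟩ hp
  by_contra hout
  simp only [Set.mem_union, Set.mem_preimage, Prod.swap_prod_mk, not_or] at hout
  simp [phiG2, hout.1, hout.2] at hp

section Phi

variable {k : ℕ}

lemma phiG2_swap (hk : 1 ≤ k) (x y : ℤ) : phiG2 k y x = -phiG2 k x y := by
  unfold phiG2
  by_cases hxy : (x, y) ∈ cyc k
  · simp [hxy, swap_notMem_cyc hk hxy, cG2_symm x y]
  · by_cases hyx : (y, x) ∈ cyc k <;> simp [hxy, hyx, cG2_symm x y]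

lemma phiG2_eq_zero_of_cG2_eq_zero (hk : 1 ≤ k) {x y : ℤ} (h : cG2 x y = 0) :
    phiG2 k x y = 0 := by
  have hxy : (x, y) ∉ cyc k := fun hp => (cG2_pos_of_mem_cyc hk hp).ne' h
  have hyx : (y, x) ∉ cyc k := fun hp => (cG2_pos_of_mem_cyc hk hp).ne' (cG2_symm x y ▸ h)
  simp [phiG2, hxy, hyx]

lemma cG2_mul_phiG2 (hk : 1 ≤ k) (x y : ℤ) :
    cG2 x y * phiG2 k x y = (cyc k).indicator 1 (x, y) - (cyc k).indicator 1 (y, x) := by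
  unfold phiG2
  by_cases hxy : (x, y) ∈ cyc k
  · have := (cG2_pos_of_mem_cyc hk hxy).ne'
    simp_all [swap_notMem_cyc hk hxy]
  · by_cases hyx : (y, x) ∈ cyc k
    · have := (cG2_pos_of_mem_cyc hk hyx).ne'
      simp_all [cG2_symm x y]
    · simp [hxy, hyx]

lemma cyc_one_eq : cyc 1 = closedWalkEdges ![0, 1, -1] := by
  ext p; simp [mem_cyc_one, closedWalkEdges, Fin.exists_fin_succ, eq_comm]

lemma cyc_eq_of_two_le (hk : 2 ≤ k) :
    cyc k = closedWalkEdges ![(k : ℤ) - 1, k, -k, -k + 1] := by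
  ext p; simp [mem_cyc_of_two_le hk, closedWalkEdges, Fin.exists_fin_succ, eq_comm]

theorem finsum_cG2_mul_phiG2 (hk : 1 ≤ k) (x : ℤ) : ∑ᶠ y, cG2 y x * phiG2 k y x = 0 := by
  simp only [cG2_mul_phiG2 hk]
  rcases (by omega : k = 1 ∨ 2 ≤ k) with rfl | hk2
  · rw [cyc_one_eq]
    exact finsum_indicator_closedWalkEdges_sub (by decide) x
  · rw [cyc_eq_of_two_le hk2]
    refine finsum_indicator_closedWalkEdges_sub ?_ x
    intro i j h
    fin_cases i <;> fin_cases j <;> simp at h ⊢ <;> omega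

lemma cG2_mul_phiG2_succ (i j : ℕ) :
    cG2 i (i + 1) * phiG2 (j + 1) i (i + 1) = (Pi.single j 1 : ℕ → ℝ) i := by
  have hfwd : ((i : ℤ), (i : ℤ) + 1) ∈ cyc (j + 1) ↔ i = j := by
    rcases Nat.eq_zero_or_pos j with rfl | hj
    · simp only [zero_add, mem_cyc_one, Prod.ext_iff]; omega
    · simp only [mem_cyc_of_two_le (by omega : 2 ≤ j + 1), Prod.ext_iff]; push_cast; omega
  have hbwd : ((i : ℤ) + 1, (i : ℤ)) ∉ cyc (j + 1) := by
    rcases Nat.eq_zero_or_pos j with rfl | hj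
    · simp only [zero_add, mem_cyc_one, Prod.ext_iff]; omega
    · simp only [mem_cyc_of_two_le (by omega : 2 ≤ j + 1), Prod.ext_iff]; push_cast; omega
  rw [cG2_mul_phiG2 (by omega), Set.indicator_of_notMem hbwd, sub_zero, Pi.single_apply]
  split_ifs with hij
  · exact Set.indicator_of_mem (hfwd.2 hij) _
  · exact Set.indicator_of_notMem (mt hfwd.1 hij) _

theorem linearIndependent_phiG2 : LinearIndependent ℝ fun k : ℕ => phiG2 (k + 1) := by
  let flux : (ℤ → ℤ → ℝ) →ₗ[ℝ] ℕ → ℝ :=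
    { toFun := fun φ i => cG2 i (i + 1) * φ i (i + 1)
      map_add' := fun φ ψ => by ext i; simp [mul_add]
      map_smul' := fun a φ => by
        ext i; simp only [Pi.smul_apply, smul_eq_mul, RingHom.id_apply]; ring }
  refine LinearIndependent.of_comp flux ?_
  convert Pi.linearIndependent_single_one ℕ ℝ with j
  ext i
  exact cG2_mul_phiG2_succ i j

end Phi

theorem quarter_mul_finsum_sq_le_G2_energy {f : ℤ → ℝ} (hf : f.HasFiniteSupport) :
    (1 / 4) * ∑ᶠ k : ℤ, f k ^ 2
      ≤ (∑ᶠ k : ℤ, ((k : ℝ) ^ 2 + 1) * (f (k - 1) - f k) ^ 2)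
          + ∑ᶠ k ∈ {k : ℤ | k ≠ 0}, (f k - f (-k)) ^ 2 := by
  have hhardy := finsum_sq_le_four_mul_finsum hf
  have hweight : ∑ᶠ k : ℤ, (k : ℝ) ^ 2 * (f (k - 1) - f k) ^ 2
      ≤ ∑ᶠ k : ℤ, ((k : ℝ) ^ 2 + 1) * (f (k - 1) - f k) ^ 2 :=
    finsum_le_finsum' (by fun_prop (disch := first | exact sub_left_injective | simp))
      (by fun_prop (disch := first | exact sub_left_injective | simp))
      fun k => mul_le_mul_of_nonneg_right (by linarith) (sq_nonneg _)
  have hcross : 0 ≤ ∑ᶠ k ∈ {k : ℤ | k ≠ 0}, (f k - f (-k)) ^ 2 :=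
    finsum_nonneg fun _ => finsum_nonneg fun _ => sq_nonneg _
  linarith

/-- For the weighted graph `G₂` on `ℤ` (edges `(n, n±1)` with weight
`c(n, n+1) = (n+1)² + 1` and `(x, -x)`, `x ≠ 0`, with weight `1`; vertex weight `m ≡ 1`):
(i) for every finitely supported `f : ℤ → ℝ`,
`(1/4) Σ_k f(k)² ≤ Σ_k (k²+1)(f(k-1) - f(k))² + Σ_{k ≠ 0} (f(k) - f(-k))² = ⟨Δ₀f, f⟩`,
so `0` is not in the spectrum of `Δ₀`;
(ii) `0` is an eigenvalue of the 1-form Laplacian `Δ₁` of infinite multiplicity: the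
1-forms `φ_k` (`k ≥ 1`) supported on the cycles `C_k` form an infinite linearly
independent family of 1-forms in `ℓ²(E₂)` satisfying `δφ_k = 0`, hence `Δ₁φ_k = 0`. -/
theorem G2_no_gap_zero_infinite_multiplicity :
    -- (i) spectral gap for `Δ₀`
    (∀ f : ℤ → ℝ, (Function.support f).Finite →
      (1 / 4) * ∑ᶠ k : ℤ, f k ^ 2
        ≤ (∑ᶠ k : ℤ, ((k : ℝ) ^ 2 + 1) * (f (k - 1) - f k) ^ 2)
            + ∑ᶠ k ∈ {k : ℤ | k ≠ 0}, (f k - f (-k)) ^ 2) ∧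
    -- (ii) the `φ_k`, `k ≥ 1`, are linearly independent …
    (LinearIndependent ℝ fun k : ℕ => phiG2 (k + 1)) ∧
    -- … and each `φ_k` is a nonzero 1-form in `ℓ²(E₂)` with `δφ_k = 0`, hence `Δ₁φ_k = 0`
    (∀ k : ℕ, 1 ≤ k →
      phiG2 k ≠ 0 ∧
      (∀ x y : ℤ, phiG2 k y x = -phiG2 k x y) ∧
      (∀ x y : ℤ, cG2 x y = 0 → phiG2 k x y = 0) ∧
      (Function.support fun p : ℤ × ℤ => phiG2 k p.1 p.2).Finite ∧
      (Summable fun p : ℤ × ℤ => cG2 p.1 p.2 * phiG2 k p.1 p.2 ^ 2) ∧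
      (∀ x : ℤ, ∑ᶠ y : ℤ, cG2 y x * phiG2 k y x = 0) ∧
      (∀ x y : ℤ, 0 < cG2 x y →
        (∑ᶠ z : ℤ, cG2 z y * phiG2 k z y) - (∑ᶠ z : ℤ, cG2 z x * phiG2 k z x) = 0)) := by
  refine ⟨fun f hf => quarter_mul_finsum_sq_le_G2_energy hf, linearIndependent_phiG2,
    fun k hk => ?_⟩
  obtain ⟨j, rfl⟩ := Nat.exists_eq_add_of_le' hk
  have hsupp := support_phiG2_finite (j + 1)
  have hδ := finsum_cG2_mul_phiG2 hk
  refine ⟨linearIndependent_phiG2.ne_zero j, phiG2_swap hk,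
    fun _ _ => phiG2_eq_zero_of_cG2_eq_zero hk, hsupp,
    summable_of_hasFiniteSupport (hsupp.subset fun p hp => ?_), hδ,
    fun x y _ => by rw [hδ, hδ, sub_zero]⟩
  exact pow_ne_zero_iff two_ne_zero |>.1 (right_ne_zero_of_mul hp)

end
end
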